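/- Define G(x) = |x|² + |x•|² for x ∈ Z[ω]. Then for x = a + bω + cω² + dω³ with a,b,c,d ∈ ℤ, G(x) is a rational integer, and (a² + b² + c² + d²)/2 ≤ G(x) ≤ (5/2)(a² + b² + c² + d²). -/

import Mathlib

/-!
The map `f` is the Galois automorphism `om ↦ om ^ 3` of `ℤ[om]`, so
`f x = a + b om³ + c om⁶ + d om⁹`. For `|z| = 1`,
`|a + b z + c z² + d z³|²` is `a² + b² + c² + d²` plus the products `aⱼ aₖ` weighted by
`z ^ (k - j) + z ^ (j - k)`. Adding the expansions at `z = om` and `z = om³` turns these weights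
into the traces `Tr(om) = Tr(om³) = 1`, `Tr(om²) = -1` over `ℚ`, so `G x` is the integral
quadratic form `gaussForm a b c d`, whose bounds are sum-of-squares identities.
-/

noncomputable def om : ℂ := Complex.exp (Real.pi * Complex.I / 5)

def Zomega : Set ℂ := {z | ∃ a b c d : ℤ, z = a + b * om + c * om ^ 2 + d * om ^ 3}

section HomOn

variable {R S : Type*} [Ring R] [Ring S] {T : Set R} {f : R → S}

theorem map_intCast_of_homOn
    (hf : ∀ x ∈ T, ∀ y ∈ T, f (x + y) = f x + f y ∧ f (x * y) = f x * f y)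
    (hT : ∀ n : ℤ, (n : R) ∈ T) (h1 : f 1 = 1) (n : ℤ) : f n = n := by
  have hsucc (m : ℤ) : f ((m + 1 : ℤ) : R) = f m + 1 := by
    rw [Int.cast_add, Int.cast_one, (hf _ (hT m) _ (by simpa using hT 1)).1, h1]
  induction n using Int.induction_on with
  | zero => simpa using (hf _ (hT 0) _ (hT 0)).1
  | succ k ih => rw [hsucc, ih]; push_cast; rfl
  | pred k ih =>
    have := hsucc (-k - 1)
    rw [sub_add_cancel, ih] at this
    rw [eq_sub_of_add_eq this.symm]
    push_cast
    abel

theorem map_pow_of_homOn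
    (hf : ∀ x ∈ T, ∀ y ∈ T, f (x + y) = f x + f y ∧ f (x * y) = f x * f y)
    (h1 : f 1 = 1) {z : R} {n : ℕ} (hz : ∀ k ≤ n, z ^ k ∈ T) : f (z ^ n) = f z ^ n := by
  induction n with
  | zero => simpa using h1
  | succ n ih =>
    rw [pow_succ', (hf _ (by simpa using hz 1 (by omega)) _ (hz n (by omega))).2,
      ih fun k hk => hz k (by omega), pow_succ']

end HomOn

open Complex

theorem normSq_cubic_of_normSq_eq_one {z : ℂ} (hz : normSq z = 1) (a b c d : ℝ) :
    (normSq (a + b * z + c * z ^ 2 + d * z ^ 3) : ℂ) =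
      a ^ 2 + b ^ 2 + c ^ 2 + d ^ 2 + (a * b + b * c + c * d) * (z + z⁻¹) +
        (a * c + b * d) * (z ^ 2 + z⁻¹ ^ 2) + a * d * (z ^ 3 + z⁻¹ ^ 3) := by
  have hz0 : z ≠ 0 := by rintro rfl; simp at hz
  have hconj : (starRingEnd ℂ) z = z⁻¹ := by
    rw [inv_def, hz]; simp
  rw [← mul_conj]
  simp only [map_add, map_mul, map_pow, conj_ofReal, hconj]
  field_simp
  ring

theorem om_eq_exp : om = exp ((Real.pi / 5 : ℝ) * I) := by
  rw [om]; push_cast; ring_nf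

theorem normSq_om : normSq om = 1 := by
  rw [om_eq_exp, normSq_eq_norm_sq, norm_exp_ofReal_mul_I, one_pow]

theorem om_pow_five : om ^ 5 = -1 := by
  rw [om, ← exp_nat_mul, ← exp_pi_mul_I]; push_cast; ring_nf

theorem om_ne_neg_one : om ≠ -1 := by
  intro h
  have hre : om.re = Real.cos (Real.pi / 5) := by rw [om_eq_exp, exp_ofReal_mul_I_re]
  rw [h, Real.cos_pi_div_five] at hre
  norm_num at hre
  linarith [Real.sqrt_nonneg 5]

theorem om_cyclotomic : om ^ 4 - om ^ 3 + om ^ 2 - om + 1 = 0 := by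
  have h : (om + 1) * (om ^ 4 - om ^ 3 + om ^ 2 - om + 1) = 0 := by
    linear_combination om_pow_five
  exact (mul_eq_zero.mp h).resolve_left fun h' => om_ne_neg_one (eq_neg_of_add_eq_zero_left h')

theorem om_inv : om⁻¹ = -om ^ 4 := by
  rw [inv_eq_of_mul_eq_one_right]
  linear_combination -om_pow_five

theorem om_pow_ten : om ^ 10 = 1 := by
  linear_combination (om ^ 5 - 1) * om_pow_five

-- `om^{±1}, om^{±3}` are the primitive 10th roots of unity, so these sums are traces to `ℚ`.
theorem om_trace_one : om + om⁻¹ + (om ^ 3 + om⁻¹ ^ 3) = 1 := by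
  rw [om_inv]
  linear_combination -om_cyclotomic - om ^ 2 * om_pow_ten

theorem om_trace_two : om ^ 2 + om⁻¹ ^ 2 + (om ^ 6 + om⁻¹ ^ 6) = -1 := by
  rw [om_inv]
  linear_combination
    om_cyclotomic + (om ^ 3 + om) * om_pow_five + om ^ 4 * (om ^ 10 + 1) * om_pow_ten

theorem om_trace_three : om ^ 3 + om⁻¹ ^ 3 + (om ^ 9 + om⁻¹ ^ 9) = 1 := by
  rw [om_inv]
  linear_combination -om_cyclotomic - om ^ 2 * om_pow_ten + (om ^ 4 - om) * om_pow_five -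
    om ^ 6 * (om ^ 20 + om ^ 10 + 1) * om_pow_ten

def gaussForm {R : Type*} [CommRing R] (a b c d : R) : R :=
  2 * (a ^ 2 + b ^ 2 + c ^ 2 + d ^ 2) + (a * b + b * c + c * d) - (a * c + b * d) + a * d

theorem normSq_add_normSq_om_pow_three (a b c d : ℝ) :
    normSq (a + b * om + c * om ^ 2 + d * om ^ 3) +
      normSq (a + b * om ^ 3 + c * (om ^ 3) ^ 2 + d * (om ^ 3) ^ 3) = gaussForm a b c d := by
  have hom3 : normSq (om ^ 3) = 1 := by rw [map_pow, normSq_om, one_pow]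
  apply ofReal_injective
  push_cast [gaussForm]
  rw [normSq_cubic_of_normSq_eq_one normSq_om, normSq_cubic_of_normSq_eq_one hom3]
  linear_combination (↑a * ↑b + ↑b * ↑c + ↑c * ↑d : ℂ) * om_trace_one +
    (↑a * ↑c + ↑b * ↑d : ℂ) * om_trace_two + (↑a * ↑d : ℂ) * om_trace_three

theorem gaussForm_bounds {R : Type*} [Field R] [LinearOrder R] [IsStrictOrderedRing R]
    (a b c d : R) :
    (a ^ 2 + b ^ 2 + c ^ 2 + d ^ 2) / 2 ≤ gaussForm a b c d ∧
      gaussForm a b c d ≤ 5 / 2 * (a ^ 2 + b ^ 2 + c ^ 2 + d ^ 2) := by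
  have lower : 2 * gaussForm a b c d - (a ^ 2 + b ^ 2 + c ^ 2 + d ^ 2) =
      (a + b) ^ 2 + (c + d) ^ 2 + (a - c) ^ 2 + (b - d) ^ 2 + (b + c) ^ 2 + (a + d) ^ 2 := by
    unfold gaussForm; ring
  have upper :
      5 * (a ^ 2 + b ^ 2 + c ^ 2 + d ^ 2) - 2 * gaussForm a b c d = (a - b + c - d) ^ 2 := by
    unfold gaussForm; ring
  have h₁ : 0 ≤ 2 * gaussForm a b c d - (a ^ 2 + b ^ 2 + c ^ 2 + d ^ 2) :=
    lower ▸ by positivity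
  have h₂ : 0 ≤ 5 * (a ^ 2 + b ^ 2 + c ^ 2 + d ^ 2) - 2 * gaussForm a b c d :=
    upper ▸ sq_nonneg _
  constructor <;> linarith

theorem apply_mem_Zomega {f : ℂ → ℂ} (h1 : f 1 = 1)
    (hf : ∀ x ∈ Zomega, ∀ y ∈ Zomega, f (x + y) = f x + f y ∧ f (x * y) = f x * f y)
    (a b c d : ℤ) :
    f (a + b * om + c * om ^ 2 + d * om ^ 3) = a + b * f om + c * f om ^ 2 + d * f om ^ 3 := by
  have mem (a b c d : ℤ) : (a + b * om + c * om ^ 2 + d * om ^ 3 : ℂ) ∈ Zomega :=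
    ⟨a, b, c, d, rfl⟩
  have hint (n : ℤ) : (n : ℂ) ∈ Zomega := by simpa using mem n 0 0 0
  have hpow : ∀ k ≤ 3, om ^ k ∈ Zomega := by
    intro k hk
    interval_cases k
    · simpa using mem 1 0 0 0
    · simpa using mem 0 1 0 0
    · simpa using mem 0 0 1 0
    · simpa using mem 0 0 0 1
  have hterm (n : ℤ) {k : ℕ} (hk : k ≤ 3) : f (n * om ^ k) = n * f om ^ k := by
    rw [(hf _ (hint n) _ (hpow k hk)).2, map_intCast_of_homOn hf hint h1,
      map_pow_of_homOn hf h1 fun j hj => hpow j (by omega)]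
  rw [(hf _ (by simpa using mem a b c 0) _ (by simpa using mem 0 0 0 d)).1,
    (hf _ (by simpa using mem a b 0 0) _ (by simpa using mem 0 0 c 0)).1,
    (hf _ (hint a) _ (by simpa using mem 0 b 0 0)).1, map_intCast_of_homOn hf hint h1,
    hterm c (by norm_num), hterm d (by norm_num)]
  simpa using hterm b (k := 1) (by norm_num)

theorem stmt6 (f : ℂ → ℂ)
    (hom : f om = om ^ 3) (h1 : f 1 = 1)
    (hhom : ∀ x ∈ Zomega, ∀ y ∈ Zomega, f (x + y) = f x + f y ∧ f (x * y) = f x * f y)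
    (a b c d : ℤ) (x : ℂ) (hx : x = a + b * om + c * om ^ 2 + d * om ^ 3) :
    (∃ n : ℤ, Complex.normSq x + Complex.normSq (f x) = n) ∧
      ((a ^ 2 + b ^ 2 + c ^ 2 + d ^ 2 : ℝ) / 2 ≤
        Complex.normSq x + Complex.normSq (f x)) ∧
      Complex.normSq x + Complex.normSq (f x) ≤
        5 / 2 * (a ^ 2 + b ^ 2 + c ^ 2 + d ^ 2 : ℝ) := by
  have hG : normSq x + normSq (f x) = gaussForm (a : ℝ) b c d := by
    rw [hx, apply_mem_Zomega h1 hhom, hom]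
    exact_mod_cast normSq_add_normSq_om_pow_three a b c d
  have hGint : gaussForm (a : ℝ) b c d = (gaussForm a b c d : ℤ) := by
    push_cast [gaussForm]; ring
  exact ⟨⟨_, hG.trans hGint⟩, hG ▸ gaussForm_bounds (a : ℝ) b c d⟩
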